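/- arXiv:1101.5067 — 2 statements merged into one kernel-verified Lean document; each statement's English description precedes it below -/
import Mathlib

section
/- Let S = (X_0, …, X_{d−1}) be a d-symbol, i, j ∈ {0,…,d−1}, and ℓ ≥ 0. Then the number of hooks (a,b,i,j) of S with a − b = ℓ equals |X_i| − |X_i ∩ X_j^{+ℓ}| if ℓ > 0, or if ℓ = 0 and i > j; and it equals 0 if ℓ = 0 and i ≤ j. -/
/-! A hook `(a, b, i, j)` with `a - b = ℓ` is determined by `a ∈ X_i`, since `b = a - ℓ`.
The conditions `b ∉ X_j` and `b ≤ a` together say exactly that `a ∉ X_j^{+ℓ}`, so the hooks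
in `H_{ij}^ℓ` correspond to `X_i \ X_j^{+ℓ}`, except that for `ℓ = 0` the tie-break `i > j`
must also hold. -/

/-- `X^{+s} = (X + s) ∪ {0,…,s−1}` for a β-set `X`. -/
def shiftUp (X : Finset ℕ) (s : ℕ) : Finset ℕ :=
  X.image (· + s) ∪ Finset.range s

/-- The `d`-symbol `s_d(X)` associated to a β-set `X`:
`X_i^{(d)} = {k ∈ ℕ : i + k*d ∈ X}`. -/
def sd (d : ℕ) (X : Finset ℕ) : Fin d → Finset ℕ :=
  fun i => (X.filter fun a => a % d = (i : ℕ)).image fun a => a / d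

/-- The inverse of `s_d`, recovering the β-set of a `d`-symbol. -/
def sdInv (d : ℕ) (S : Fin d → Finset ℕ) : Finset ℕ :=
  Finset.univ.biUnion fun i => (S i).image fun k => (i : ℕ) + k * d

/-- Hooks of a β-set `X`: pairs `(a,b)` with `a > b`, `a ∈ X`, `b ∉ X`. -/
def betaHooks (X : Finset ℕ) : Finset (ℕ × ℕ) :=
  (X ×ˢ Finset.range (X.sup id + 1)).filter fun p => p.2 < p.1 ∧ p.2 ∉ X

/-- Hooks of a `d`-symbol `S`: quadruples `(a,b,i,j)` with `a ∈ S i`, `b ∉ S j`,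
and either `a > b`, or `a = b` and `i > j`. -/
def symbolHooks {d : ℕ} (S : Fin d → Finset ℕ) : Finset (ℕ × ℕ × Fin d × Fin d) :=
  (Finset.range ((Finset.univ.sup fun i => (S i).sup id) + 1) ×ˢ
      Finset.range ((Finset.univ.sup fun i => (S i).sup id) + 1) ×ˢ
      (Finset.univ : Finset (Fin d)) ×ˢ (Finset.univ : Finset (Fin d))).filter
    fun z => z.1 ∈ S z.2.2.1 ∧ z.2.1 ∉ S z.2.2.2 ∧
      (z.2.1 < z.1 ∨ (z.1 = z.2.1 ∧ z.2.2.2 < z.2.2.1))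

/-- The partition `p(X)` of a β-set `X = {a_1 > … > a_t}`, as the multiset of the
nonzero numbers among `a_i − (t−i)`; the element `a` contributes the part
`a − #{b ∈ X : b < a}`. -/
def partitionOf (X : Finset ℕ) : Multiset ℕ :=
  Multiset.filter (· ≠ 0) (X.val.map fun a => a - (X.filter (· < a)).card)

/-- `r`, the maximal number of parts among the partitions `p(X_i)` of a `d`-symbol. -/
def quotCard {d : ℕ} (S : Fin d → Finset ℕ) : ℕ :=
  Finset.univ.sup fun i => Multiset.card (partitionOf (S i))

/-- `Y` is the balanced quotient `Q(S)` of `S`: each `Y i` is the (unique) β-set of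
cardinality `r` with `p(Y i) = p(S i)`, where `r` is the maximal number of parts
among the `p(S i)`. -/
def IsBalancedQuotient {d : ℕ} (S Y : Fin d → Finset ℕ) : Prop :=
  ∀ i, (Y i).card = quotCard S ∧ partitionOf (Y i) = partitionOf (S i)

/-- The core `C(S) = ([x_0],…,[x_{d−1}])` of a `d`-symbol, `x_i = |X_i|`. -/
def coreSymbol {d : ℕ} (S : Fin d → Finset ℕ) : Fin d → Finset ℕ :=
  fun i => Finset.range (S i).card

/-- The `δ`-length `k(a−b) + c_i − c_j` of a hook `(a,b,i,j)`, for the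
`d`-hook data tuple `δ = (c_0,…,c_{d−1};k)`. -/
noncomputable def hookLen {d : ℕ} (c : Fin d → ℝ) (k : ℝ)
    (z : ℕ × ℕ × Fin d × Fin d) : ℝ :=
  k * ((z.1 - z.2.1 : ℕ) : ℝ) + c z.2.2.1 - c z.2.2.2

/-- The multiset `𝓗^δ(S)` of `δ`-lengths of all hooks of `S`. -/
noncomputable def hookLens {d : ℕ} (c : Fin d → ℝ) (k : ℝ)
    (S : Fin d → Finset ℕ) : Multiset ℝ :=
  (symbolHooks S).val.map (hookLen c k)

/-- `H_{ij}^ℓ(S)`, the set of hooks `(a,b,i,j)` of `S` with `a − b = ℓ`. -/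
def Hij {d : ℕ} (S : Fin d → Finset ℕ) (i j : Fin d) (ℓ : ℕ) :
    Finset (ℕ × ℕ × Fin d × Fin d) :=
  (symbolHooks S).filter fun z => z.2.2.1 = i ∧ z.2.2.2 = j ∧ z.1 - z.2.1 = ℓ

/-- The sign-modified length `h̄^{δ_S}` (on hooks of the balanced quotient), where
`x` records the cardinalities `x_i = |X_i|` of `S`, and `δ_S = (c_i + x_i k; k)`.
For a hook `z = (a,b,u,v)` with `ℓ = a − b`: relabelling so that `Δ = x_i − x_j ≥ 0`,
the sign is `+` if `z` lies in position `(i,j)`, or in position `(j,i)` with `ℓ > Δ`,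
or in position `(j,i)` with `ℓ = Δ` and `i < j`; otherwise the sign is `−`. -/
noncomputable def signedLen {d : ℕ} (x : Fin d → ℕ) (c : Fin d → ℝ) (k : ℝ)
    (z : ℕ × ℕ × Fin d × Fin d) : ℝ :=
  if x z.2.2.2 ≤ x z.2.2.1 then
    k * ((z.1 - z.2.1 : ℕ) : ℝ) + (c z.2.2.1 + (x z.2.2.1 : ℝ) * k)
      - (c z.2.2.2 + (x z.2.2.2 : ℝ) * k)
  else if x z.2.2.2 - x z.2.2.1 < z.1 - z.2.1 ∨
      (z.1 - z.2.1 = x z.2.2.2 - x z.2.2.1 ∧ (z.2.2.2 : ℕ) < (z.2.2.1 : ℕ)) then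
    k * ((z.1 - z.2.1 : ℕ) : ℝ) + (c z.2.2.1 + (x z.2.2.1 : ℝ) * k)
      - (c z.2.2.2 + (x z.2.2.2 : ℝ) * k)
  else
    -(k * ((z.1 - z.2.1 : ℕ) : ℝ) + (c z.2.2.1 + (x z.2.2.1 : ℝ) * k)
      - (c z.2.2.2 + (x z.2.2.2 : ℝ) * k))

/-- The permutation `σ_{d,ℓ,e}` of `ℕ`:
`σ(r(dℓ) + sd + t) = r(dℓ) + sd + ((t + re) mod d)`. -/
def twistFun (d ℓ e : ℕ) (n : ℕ) : ℕ :=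
  d * ℓ * (n / (d * ℓ)) + d * (n % (d * ℓ) / d) + (n % d + n / (d * ℓ) * e) % d

open Finset

theorem mem_shiftUp {X : Finset ℕ} {s n : ℕ} :
    n ∈ shiftUp X s ↔ n < s ∨ (s ≤ n ∧ n - s ∈ X) := by
  simp only [shiftUp, mem_union, mem_image, mem_range]
  constructor
  · rintro (⟨x, hx, rfl⟩ | h)
    · exact .inr ⟨by omega, by simpa using hx⟩
    · exact .inl h
  · rintro (h | ⟨hsn, hn⟩)
    · exact .inr h
    · exact .inl ⟨n - s, hn, by omega⟩

theorem notMem_shiftUp {X : Finset ℕ} {s n : ℕ} : n ∉ shiftUp X s ↔ s ≤ n ∧ n - s ∉ X := by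
  rw [mem_shiftUp, not_or, not_lt, not_and]
  tauto

theorem le_sup_of_mem_symbol {d : ℕ} {S : Fin d → Finset ℕ} {i : Fin d} {a : ℕ} (ha : a ∈ S i) :
    a ≤ univ.sup fun i => (S i).sup id :=
  le_sup_of_le (mem_univ i) (le_sup (f := id) ha)

theorem mem_symbolHooks {d : ℕ} {S : Fin d → Finset ℕ} {a b : ℕ} {i j : Fin d} :
    (a, b, i, j) ∈ symbolHooks S ↔ a ∈ S i ∧ b ∉ S j ∧ (b < a ∨ (a = b ∧ j < i)) := by
  simp only [symbolHooks, mem_filter, mem_product, mem_range, mem_univ, and_true,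
    and_iff_right_iff_imp]
  rintro ⟨ha, -, hba⟩
  have := le_sup_of_mem_symbol ha
  omega

theorem mem_Hij {d : ℕ} {S : Fin d → Finset ℕ} {i j : Fin d} {ℓ : ℕ}
    {z : ℕ × ℕ × Fin d × Fin d} :
    z ∈ Hij S i j ℓ ↔ z.1 ∈ S i ∧ z.2.1 ∉ S j ∧ (z.2.1 < z.1 ∨ (z.1 = z.2.1 ∧ j < i)) ∧
      z.2.2 = (i, j) ∧ z.1 - z.2.1 = ℓ := by
  obtain ⟨a, b, u, v⟩ := z
  simp only [Hij, mem_filter, mem_symbolHooks, Prod.mk.injEq]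
  constructor
  · rintro ⟨h, rfl, rfl, hℓ⟩
    exact ⟨h.1, h.2.1, h.2.2, ⟨rfl, rfl⟩, hℓ⟩
  · rintro ⟨ha, hb, hba, ⟨rfl, rfl⟩, hℓ⟩
    exact ⟨⟨ha, hb, hba⟩, rfl, rfl, hℓ⟩

theorem Hij_eq_image_sdiff_shiftUp {d : ℕ} (S : Fin d → Finset ℕ) {i j : Fin d} {ℓ : ℕ}
    (h : 0 < ℓ ∨ (ℓ = 0 ∧ j < i)) :
    Hij S i j ℓ = (S i \ shiftUp (S j) ℓ).image fun a => (a, a - ℓ, i, j) := by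
  ext ⟨a, b, u, v⟩
  simp only [mem_Hij, mem_image, mem_sdiff, notMem_shiftUp, Prod.mk.injEq]
  constructor
  · rintro ⟨ha, hb, hba, ⟨rfl, rfl⟩, hℓ⟩
    have hb' : b = a - ℓ := by omega
    subst hb'
    exact ⟨a, ⟨ha, by omega, hb⟩, rfl, rfl, rfl, rfl⟩
  · rintro ⟨a, ⟨ha, hℓa, hb⟩, rfl, rfl, rfl, rfl⟩
    exact ⟨ha, hb, by omega, ⟨rfl, rfl⟩, by omega⟩

theorem Hij_zero_eq_empty {d : ℕ} (S : Fin d → Finset ℕ) {i j : Fin d} (hij : i ≤ j) :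
    Hij S i j 0 = ∅ := by
  ext z
  simp only [mem_Hij, notMem_empty, iff_false]
  rintro ⟨-, -, hba | ⟨-, hji⟩, -, hℓ⟩
  · omega
  · exact hji.not_ge hij

theorem card_Hij_general (d : ℕ) (S : Fin d → Finset ℕ) (i j : Fin d) (ℓ : ℕ) :
    ((0 < ℓ ∨ (ℓ = 0 ∧ j < i)) →
      (Hij S i j ℓ).card = (S i).card - (S i ∩ shiftUp (S j) ℓ).card) ∧
    ((ℓ = 0 ∧ i ≤ j) → (Hij S i j ℓ).card = 0) := by
  refine ⟨fun h => ?_, fun ⟨hℓ, hij⟩ => ?_⟩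
  · rw [Hij_eq_image_sdiff_shiftUp S h,
      card_image_of_injective _ fun _ _ hxy => congrArg Prod.fst hxy, card_sdiff, inter_comm]
  · rw [hℓ, Hij_zero_eq_empty S hij, card_empty]

/-- The number of hooks `(a,b,i,j)` of a `d`-symbol `S` with `a − b = ℓ` equals
`|X_i| − |X_i ∩ X_j^{+ℓ}|` if `ℓ > 0`, or if `ℓ = 0` and `i > j`; and it equals `0`
if `ℓ = 0` and `i ≤ j`. -/
theorem card_Hij (d : ℕ) (hd : 0 < d) (S : Fin d → Finset ℕ) (i j : Fin d) (ℓ : ℕ) :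
    ((0 < ℓ ∨ (ℓ = 0 ∧ j < i)) →
      (Hij S i j ℓ).card = (S i).card - (S i ∩ shiftUp (S j) ℓ).card) ∧
    ((ℓ = 0 ∧ i ≤ j) → (Hij S i j ℓ).card = 0) :=
  card_Hij_general d S i j ℓ
end

section
/- Let S = (X_0,…,X_{d−1}) be a d-symbol with balanced quotient Q = Q(S) and core C = C(S), set x_i = |X_i|, let δ = (c_0,…,c_{d−1}; k) be a d-hook data tuple and δ_S = (c_0 + x_0 k, …, c_{d−1} + x_{d−1} k; k). Then there is an equality of multisets 𝓗^δ(S) = 𝓗̄^{δ_S}(Q) ∪ 𝓗^δ(C), where 𝓗̄^{δ_S}(Q) is the multiset of all sign-modified lengths h̄^{δ_S}(z), z ∈ H(Q), and ∪ denotes multiset union (sum). -/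
/-!
Every length in the statement depends on a hook `(a, b, i, j)` only through its index
`(i, j, a - b)`, so it suffices to compare multisets of indices, i.e. to count, for each
position `(i, j)` and arm `m`, the hooks of `S`, of `Q` and of `C`.

A β-set is determined by its cardinality and its partition, so `Q_i^{+x_i} = X_i^{+r}`; hence the
hooks of `Q` at `(i, j)` are those of `X_i^{+x_j}` against `X_j^{+x_i}`, two β-sets of equal size.
With `Δ = x_i - x_j ≥ 0`, a hook of `Q` at `(i, j)` of arm `ℓ` corresponds to a hook of `S` of arm
`ℓ + Δ`; at `(j, i)`, arms `ℓ > Δ` correspond to hooks of `S` at `(j, i)` of arm `ℓ - Δ`, while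
arms `ℓ ≤ Δ` correspond to hooks of `S` at `(i, j)` of arm `Δ - ℓ` (this reversal is the sign
in `h̄`); the hooks of `S` at `(i, j)` of arm `m < Δ` left unmatched number `Δ - m`, exactly as
many as those of the core.
-/

open Finset

section BetaSets

def hookCount (A B : Finset ℕ) (m : ℕ) : ℕ := #{a ∈ A | m ≤ a ∧ a - m ∉ B}

lemma add_mem_shiftUp_iff {A : Finset ℕ} {a s : ℕ} : a + s ∈ shiftUp A s ↔ a ∈ A := by
  simp [shiftUp]

lemma mem_shiftUp_of_lt (A : Finset ℕ) {b s : ℕ} (h : b < s) : b ∈ shiftUp A s := by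
  simp [shiftUp, h]

lemma shiftUp_shiftUp (A : Finset ℕ) (s t : ℕ) :
    shiftUp (shiftUp A s) t = shiftUp A (s + t) := by
  ext b
  rcases lt_or_ge b (s + t) with hb | hb
  · simp only [mem_shiftUp_of_lt A hb, iff_true]
    rcases lt_or_ge b t with hbt | hbt
    · exact mem_shiftUp_of_lt _ hbt
    · rw [← Nat.sub_add_cancel hbt, add_mem_shiftUp_iff]
      exact mem_shiftUp_of_lt A (by omega)
  · obtain ⟨c, rfl⟩ := Nat.exists_eq_add_of_le' hb
    rw [add_mem_shiftUp_iff, ← add_assoc, add_mem_shiftUp_iff, add_mem_shiftUp_iff]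

lemma disjoint_image_add_range (A : Finset ℕ) (s : ℕ) :
    Disjoint (A.image (· + s)) (range s) := by
  simp only [disjoint_left, mem_image, mem_range]
  omega

lemma card_shiftUp (A : Finset ℕ) (s : ℕ) : #(shiftUp A s) = #A + s := by
  rw [shiftUp, card_union_of_disjoint (disjoint_image_add_range A s),
    card_image_of_injective _ (add_left_injective s), card_range]

lemma hookCount_shiftUp_of_le (A B : Finset ℕ) {s t ℓ : ℕ} (h : s ≤ ℓ + t) :
    hookCount (shiftUp A s) (shiftUp B t) ℓ = hookCount A B (ℓ + t - s) := by
  have hrange : {u ∈ range s | ℓ ≤ u ∧ u - ℓ ∉ shiftUp B t} = ∅ :=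
    filter_eq_empty_iff.2 fun u hu ⟨_, hn⟩ =>
      hn (mem_shiftUp_of_lt B (by rw [mem_range] at hu; omega))
  rw [hookCount, shiftUp.eq_1 A s, filter_union, hrange, union_empty, filter_image,
    card_image_of_injective _ (add_left_injective s), hookCount]
  congr 1
  refine filter_congr fun a _ => ?_
  rcases lt_or_ge a (ℓ + t - s) with ha | ha
  · simp only [show ¬ ℓ + t - s ≤ a by omega, false_and, iff_false, not_and, not_not]
    exact fun _ => mem_shiftUp_of_lt B (by omega)
  · rw [show a + s - ℓ = a - (ℓ + t - s) + t by omega, add_mem_shiftUp_iff]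
    simp only [ha, show ℓ ≤ a + s by omega, true_and]

lemma hookCount_shiftUp_shiftUp (A B : Finset ℕ) (s ℓ : ℕ) :
    hookCount (shiftUp A s) (shiftUp B s) ℓ = hookCount A B ℓ := by
  rw [hookCount_shiftUp_of_le A B (by omega), Nat.add_sub_cancel]

lemma hookCount_shiftUp_of_add_eq (A B : Finset ℕ) {s t ℓ p : ℕ} (h : ℓ + t + p = s) :
    hookCount (shiftUp A s) (shiftUp B t) ℓ = #{a ∈ A | a + p ∉ B} + #(range p \ B) := by
  rw [hookCount, shiftUp.eq_1 A s, filter_union, card_union_of_disjoint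
    (disjoint_filter_filter (disjoint_image_add_range A s)), filter_image,
    card_image_of_injective _ (add_left_injective s)]
  congr 1
  · congr 1
    refine filter_congr fun a _ => ?_
    rw [show a + s - ℓ = a + p + t by omega, add_mem_shiftUp_iff]
    simp only [show ℓ ≤ a + s by omega, true_and]
  · rw [show {u ∈ range s | ℓ ≤ u ∧ u - ℓ ∉ shiftUp B t} = (range p \ B).image (· + (ℓ + t))
      from ?_, card_image_of_injective _ (add_left_injective _)]
    ext u
    simp only [mem_filter, mem_range, mem_image, mem_sdiff]
    constructor
    · rintro ⟨hus, hlu, hn⟩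
      have hlt : ℓ + t ≤ u := by
        by_contra hlt
        exact hn (mem_shiftUp_of_lt B (by omega))
      rw [show u - ℓ = u - (ℓ + t) + t by omega, add_mem_shiftUp_iff] at hn
      exact ⟨u - (ℓ + t), ⟨by omega, hn⟩, by omega⟩
    · rintro ⟨w, ⟨hw, hn⟩, rfl⟩
      rw [show w + (ℓ + t) - ℓ = w + t by omega, add_mem_shiftUp_iff]
      exact ⟨by omega, by omega, hn⟩

lemma hookCount_add_card_add_card (A B : Finset ℕ) (m : ℕ) :
    hookCount A B m + #{a ∈ A | a < m} + #{b ∈ B | b + m ∈ A} = #A := by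
  have hmatched : #{a ∈ A | m ≤ a ∧ a - m ∈ B} = #{b ∈ B | b + m ∈ A} := by
    refine card_nbij' (· - m) (· + m) ?_ ?_ ?_ ?_ <;> intro u hu <;>
      simp only [coe_filter, Set.mem_ofPred_eq] at hu ⊢
    · exact ⟨hu.2.2, by rw [Nat.sub_add_cancel hu.2.1]; exact hu.1⟩
    · exact ⟨by simpa using hu.2, by omega, by simpa using hu.1⟩
    · omega
    · omega
  have hsplit := card_filter_add_card_filter_not (s := {a ∈ A | m ≤ a}) (fun a => a - m ∉ B)
  have hlow := card_filter_add_card_filter_not (s := A) (fun a => m ≤ a)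
  simp only [filter_filter, not_not, not_le] at hsplit hlow
  rw [hookCount, ← hmatched]
  omega

lemma hookCount_range (p q m : ℕ) : hookCount (range p) (range q) m = p - (q + m) := by
  rw [hookCount, ← Nat.card_Ico]
  congr 1
  ext u
  simp only [mem_filter, mem_range, mem_Ico]
  omega

lemma hookCount_shiftUp_card_of_add_eq (A B : Finset ℕ) {ℓ m : ℕ} (h : ℓ + #A = m + #B) :
    hookCount (shiftUp A #B) (shiftUp B #A) ℓ = hookCount A B m := by
  rw [hookCount_shiftUp_of_le A B (by omega)]
  congr 1
  omega

lemma hookCount_shiftUp_card_swap (A B : Finset ℕ) {ℓ m : ℕ} (h : m + ℓ + #B = #A) :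
    hookCount (shiftUp B #A) (shiftUp A #B) ℓ + ℓ = hookCount A B m := by
  have hshift := hookCount_shiftUp_of_add_eq B A (s := #A) (t := #B) (ℓ := ℓ) (p := m) (by omega)
  have hcount := hookCount_add_card_add_card A B m
  have hB := card_filter_add_card_filter_not (s := B) (fun b => b + m ∈ A)
  have hrange := card_sdiff_add_card_inter (range m) A
  have hlow : range m ∩ A = {a ∈ A | a < m} := by
    ext a
    simp only [mem_inter, mem_range, mem_filter]
    tauto
  rw [hlow, card_range] at hrange
  omega

end BetaSets

section Partitions

/-- For `a ∈ A`, `gapsBelow A a` is the part of `p(A)` contributed by `a` (possibly `0`). -/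
def gapsBelow (A : Finset ℕ) (a : ℕ) : ℕ := #(range a \ A)

lemma gapsBelow_eq (A : Finset ℕ) (a : ℕ) : gapsBelow A a = a - #{b ∈ A | b < a} := by
  rw [gapsBelow, card_sdiff, card_range]
  congr 2
  ext b
  simp only [mem_inter, mem_range, mem_filter]

lemma partitionOf_eq_filter_map_gapsBelow (A : Finset ℕ) :
    partitionOf A = (A.val.map (gapsBelow A)).filter (· ≠ 0) := by
  simp only [partitionOf, gapsBelow_eq]

lemma gapsBelow_mono (A : Finset ℕ) : Monotone (gapsBelow A) := fun _ _ h =>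
  card_le_card (sdiff_subset_sdiff (range_subset_range.2 h) subset_rfl)

lemma gapsBelow_of_forall_lt {A : Finset ℕ} {a : ℕ} (h : ∀ x ∈ A, x < a) :
    gapsBelow A a = a - #A := by
  rw [gapsBelow, card_sdiff_of_subset fun x hx => mem_range.2 (h x hx), card_range]

lemma gapsBelow_shiftUp_add (A : Finset ℕ) (s a : ℕ) :
    gapsBelow (shiftUp A s) (a + s) = gapsBelow A a := by
  rw [gapsBelow, gapsBelow, ← card_image_of_injective (range a \ A) (add_left_injective s)]
  congr 1
  ext w
  simp only [mem_sdiff, mem_range, mem_image]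
  constructor
  · rintro ⟨hw, hn⟩
    have hsw : s ≤ w := by
      by_contra hsw
      exact hn (mem_shiftUp_of_lt A (by omega))
    rw [← Nat.sub_add_cancel hsw, add_mem_shiftUp_iff] at hn
    exact ⟨w - s, ⟨by omega, hn⟩, by omega⟩
  · rintro ⟨v, ⟨hv, hn⟩, rfl⟩
    rw [add_mem_shiftUp_iff]
    exact ⟨by omega, hn⟩

lemma gapsBelow_shiftUp_of_lt (A : Finset ℕ) {s u : ℕ} (h : u < s) :
    gapsBelow (shiftUp A s) u = 0 :=
  card_eq_zero.2 <| sdiff_eq_empty_iff_subset.2 fun _ hw =>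
    mem_shiftUp_of_lt A ((mem_range.1 hw).trans h)

lemma partitionOf_shiftUp (A : Finset ℕ) (s : ℕ) : partitionOf (shiftUp A s) = partitionOf A := by
  have hval : (shiftUp A s).val = A.val.map (· + s) + (range s).val := by
    rw [shiftUp, ← disjUnion_eq_union _ _ (disjoint_image_add_range A s), disjUnion_val,
      image_val_of_injOn (add_left_injective s).injOn]
  have hlow : ((range s).val.map (gapsBelow (shiftUp A s))).filter (· ≠ 0) = 0 :=
    Multiset.filter_eq_nil.2 fun u hu => by
      obtain ⟨v, hv, rfl⟩ := Multiset.mem_map.1 hu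
      simpa using gapsBelow_shiftUp_of_lt A (mem_range.1 hv)
  rw [partitionOf_eq_filter_map_gapsBelow, partitionOf_eq_filter_map_gapsBelow, hval,
    Multiset.map_add, Multiset.filter_add, hlow, add_zero, Multiset.map_map]
  congr 1
  exact Multiset.map_congr rfl fun a _ => gapsBelow_shiftUp_add A s a

lemma map_gapsBelow_eq_add_replicate (A : Finset ℕ) :
    A.val.map (gapsBelow A) =
      partitionOf A + Multiset.replicate (#A - Multiset.card (partitionOf A)) 0 := by
  rw [partitionOf_eq_filter_map_gapsBelow]
  set M := A.val.map (gapsBelow A) with hM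
  have hsplit := Multiset.filter_add_not (· ≠ 0) M
  have hcard := congrArg Multiset.card hsplit
  rw [Multiset.card_add, hM, Multiset.card_map, card_val, ← hM] at hcard
  rw [(Multiset.eq_replicate (s := M.filter fun a => ¬ a ≠ 0) (a := 0)
    (n := #A - Multiset.card (M.filter (· ≠ 0)))).2
    ⟨by omega, fun b hb => not_not.1 (Multiset.mem_filter.1 hb).2⟩] at hsplit
  exact hsplit.symm

lemma map_gapsBelow_insert_of_forall_lt {A : Finset ℕ} {a : ℕ} (h : ∀ x ∈ A, x < a) :
    (insert a A).val.map (gapsBelow (insert a A)) = (a - #A) ::ₘ A.val.map (gapsBelow A) := by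
  have hgaps : ∀ x ≤ a, gapsBelow (insert a A) x = gapsBelow A x := fun x hx => by
    rw [gapsBelow, gapsBelow, sdiff_insert_of_notMem (by simpa using hx)]
  rw [insert_val_of_notMem fun ha => (h a ha).false, Multiset.map_cons, hgaps a le_rfl,
    gapsBelow_of_forall_lt h]
  congr 1
  exact Multiset.map_congr rfl fun x hx => hgaps x (h x hx).le

lemma le_of_mem_map_gapsBelow_insert {A : Finset ℕ} {a y : ℕ} (h : ∀ x ∈ A, x < a)
    (hy : y ∈ (a - #A) ::ₘ A.val.map (gapsBelow A)) : y ≤ a - #A := by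
  rcases Multiset.mem_cons.1 hy with rfl | hy
  · exact le_rfl
  · obtain ⟨x, hx, rfl⟩ := Multiset.mem_map.1 hy
    exact (gapsBelow_mono A (h x hx).le).trans (gapsBelow_of_forall_lt h).le

lemma card_le_of_forall_lt {A : Finset ℕ} {a : ℕ} (h : ∀ x ∈ A, x < a) : #A ≤ a := by
  simpa using card_le_card fun x hx => mem_range.2 (h x hx)

/-- `gapsBelow A` is monotone, so the largest element `a` of `A` is recovered from the largest
value `a - (#A - 1)`; induct on the maximum. -/
lemma eq_of_map_gapsBelow_eq {A B : Finset ℕ}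
    (h : A.val.map (gapsBelow A) = B.val.map (gapsBelow B)) : A = B := by
  induction A using Finset.induction_on_max generalizing B with
  | empty => exact (val_eq_zero.1 (Multiset.map_eq_zero.1 h.symm)).symm
  | insert a A hA ih =>
    have hB : B.Nonempty := by
      rw [← card_pos, ← card_val, ← Multiset.card_map (gapsBelow B), ← h, Multiset.card_map,
        card_val]
      exact card_pos.2 (insert_nonempty a A)
    obtain ⟨b, B', hB', rfl⟩ : ∃ b B', (∀ x ∈ B', x < b) ∧ B = insert b B' :=
      ⟨B.max' hB, B.erase (B.max' hB), fun x hx => B.lt_max'_of_mem_erase_max' hB hx,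
        (insert_erase (B.max'_mem hB)).symm⟩
    rw [map_gapsBelow_insert_of_forall_lt hA, map_gapsBelow_insert_of_forall_lt hB'] at h
    have hcard : #A = #B' := by simpa using congrArg Multiset.card h
    have htop : a - #A = b - #B' := le_antisymm
      (le_of_mem_map_gapsBelow_insert hB' (h ▸ Multiset.mem_cons_self _ _))
      (le_of_mem_map_gapsBelow_insert hA (h.symm ▸ Multiset.mem_cons_self _ _))
    have hab : a = b := by
      have := card_le_of_forall_lt hA
      have := card_le_of_forall_lt hB'
      omega
    rw [htop, Multiset.cons_inj_right] at h
    rw [hab, ih h]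

lemma eq_of_card_eq_of_partitionOf_eq {A B : Finset ℕ} (hcard : #A = #B)
    (hp : partitionOf A = partitionOf B) : A = B :=
  eq_of_map_gapsBelow_eq (by rw [map_gapsBelow_eq_add_replicate, map_gapsBelow_eq_add_replicate,
    hcard, hp])

end Partitions

section BalancedQuotient

variable {d : ℕ} {S Y : Fin d → Finset ℕ}

lemma shiftUp_card_eq_shiftUp_quotCard (hY : IsBalancedQuotient S Y) (w : Fin d) :
    shiftUp (Y w) #(S w) = shiftUp (S w) (quotCard S) :=
  eq_of_card_eq_of_partitionOf_eq (by rw [card_shiftUp, card_shiftUp, (hY w).1, add_comm])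
    (by rw [partitionOf_shiftUp, partitionOf_shiftUp, (hY w).2])

lemma hookCount_balancedQuotient (hY : IsBalancedQuotient S Y) (u v : Fin d) (ℓ : ℕ) :
    hookCount (Y u) (Y v) ℓ = hookCount (shiftUp (S u) #(S v)) (shiftUp (S v) #(S u)) ℓ := by
  calc hookCount (Y u) (Y v) ℓ
      = hookCount (shiftUp (shiftUp (Y u) #(S u)) #(S v))
          (shiftUp (shiftUp (Y v) #(S v)) #(S u)) ℓ := by
        rw [shiftUp_shiftUp, shiftUp_shiftUp, add_comm #(S v), hookCount_shiftUp_shiftUp]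
    _ = hookCount (shiftUp (shiftUp (S u) #(S v)) (quotCard S))
          (shiftUp (shiftUp (S v) #(S u)) (quotCard S)) ℓ := by
        rw [shiftUp_card_eq_shiftUp_quotCard hY, shiftUp_card_eq_shiftUp_quotCard hY,
          shiftUp_shiftUp, shiftUp_shiftUp, shiftUp_shiftUp, shiftUp_shiftUp, add_comm #(S v),
          add_comm #(S u)]
    _ = _ := hookCount_shiftUp_shiftUp _ _ _ _

end BalancedQuotient

section HookIndices

variable {d : ℕ}

/-- A hook `(a, b, i, j)` is recorded by its position `(i, j)` and its arm `a - b`; arms are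
integers because the shift by `x_i - x_j` may make them negative. -/
abbrev HookIndex (d : ℕ) := Fin d × Fin d × ℤ

def hookIndex (z : ℕ × ℕ × Fin d × Fin d) : HookIndex d := (z.2.2.1, z.2.2.2, (z.1 : ℤ) - z.2.1)

namespace HookIndex

def IsPositive (t : HookIndex d) : Prop := 0 < t.2.2 ∨ t.2.2 = 0 ∧ t.2.1 < t.1

instance : DecidablePred (IsPositive (d := d)) := fun _ => by unfold IsPositive; infer_instance

def reverse (t : HookIndex d) : HookIndex d := (t.2.1, t.1, -t.2.2)

def normalize (t : HookIndex d) : HookIndex d := if t.IsPositive then t else t.reverse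

def shift (x : Fin d → ℤ) (t : HookIndex d) : HookIndex d := (t.1, t.2.1, t.2.2 + (x t.1 - x t.2.1))

noncomputable def len (c : Fin d → ℝ) (k : ℝ) (t : HookIndex d) : ℝ := k * t.2.2 + c t.1 - c t.2.1

lemma reverse_reverse (t : HookIndex d) : t.reverse.reverse = t := by
  simp [reverse]

lemma not_isPositive_reverse {t : HookIndex d} (ht : t.IsPositive) : ¬ t.reverse.IsPositive := by
  simp only [IsPositive, reverse] at ht ⊢
  omega

lemma normalize_eq_iff {s : HookIndex d} (hs : s.IsPositive) (t : HookIndex d) :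
    t.normalize = s ↔ t = s ∨ t = s.reverse := by
  unfold normalize
  split_ifs with ht
  · refine ⟨Or.inl, ?_⟩
    rintro (h | rfl)
    · exact h
    · exact absurd ht (not_isPositive_reverse hs)
  · refine ⟨fun h => Or.inr (by rw [← h, reverse_reverse]), ?_⟩
    rintro (rfl | rfl)
    · exact absurd hs ht
    · exact reverse_reverse s

lemma isPositive_normalize {t : HookIndex d} (h : t.1 ≠ t.2.1 ∨ t.2.2 ≠ 0) :
    t.normalize.IsPositive := by
  unfold normalize
  split_ifs with ht
  · exact ht
  · simp only [IsPositive, reverse] at ht ⊢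
    omega

lemma count_map_normalize {s : HookIndex d} (hs : s.IsPositive) (M : Multiset (HookIndex d)) :
    (M.map normalize).count s = M.count s + M.count s.reverse := by
  have hboth : M.filter (fun t => s = t ∧ s.reverse = t) = 0 :=
    Multiset.filter_eq_nil.2 fun _ _ h =>
      not_isPositive_reverse hs (by rw [h.2.trans h.1.symm]; exact hs)
  rw [Multiset.count_map, Multiset.count_eq_card_filter_eq, Multiset.count_eq_card_filter_eq,
    ← Multiset.card_add, Multiset.filter_add_filter, hboth, add_zero]
  congr 1
  exact Multiset.filter_congr fun t _ => by
    rw [eq_comm, normalize_eq_iff hs]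
    exact or_congr eq_comm eq_comm

lemma count_map_shift (x : Fin d → ℤ) (M : Multiset (HookIndex d)) (t : HookIndex d) :
    (M.map (shift x)).count t = M.count (t.shift (-x)) := by
  have hinj : Function.Injective (shift x) := by
    rintro ⟨i, j, e⟩ ⟨i', j', e'⟩ h
    simp only [shift, Prod.mk.injEq] at h
    obtain ⟨rfl, rfl, h⟩ := h
    simpa using h
  have hinv : (t.shift (-x)).shift x = t := by
    obtain ⟨i, j, e⟩ := t
    simp only [shift, Pi.neg_apply, Prod.mk.injEq, true_and]
    ring
  conv_lhs => rw [← hinv]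
  exact Multiset.count_map_eq_count' _ _ hinj _

end HookIndex

end HookIndices

section SymbolHooks

variable {d : ℕ}

open HookIndex

lemma mem_symbolHooks_s10 {W : Fin d → Finset ℕ} {z : ℕ × ℕ × Fin d × Fin d} :
    z ∈ symbolHooks W ↔ z.1 ∈ W z.2.2.1 ∧ z.2.1 ∉ W z.2.2.2 ∧
      (z.2.1 < z.1 ∨ z.1 = z.2.1 ∧ z.2.2.2 < z.2.2.1) := by
  simp only [symbolHooks, mem_filter, mem_product, mem_range, mem_univ, and_true]
  refine ⟨fun h => h.2, fun h => ⟨?_, h⟩⟩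
  have hbound : z.1 ≤ univ.sup fun i => (W i).sup id :=
    (le_sup (f := id) h.1).trans (le_sup (f := fun i => (W i).sup id) (mem_univ _))
  omega

lemma isPositive_hookIndex {W : Fin d → Finset ℕ} {z : ℕ × ℕ × Fin d × Fin d}
    (hz : z ∈ symbolHooks W) : (hookIndex z).IsPositive := by
  have := (mem_symbolHooks_s10.1 hz).2.2
  simp only [IsPositive, hookIndex]
  omega

lemma isPositive_normalize_shift_hookIndex {W : Fin d → Finset ℕ} {z : ℕ × ℕ × Fin d × Fin d}
    (hz : z ∈ symbolHooks W) (x : Fin d → ℤ) : ((hookIndex z).shift x).normalize.IsPositive := by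
  refine isPositive_normalize ?_
  have := (mem_symbolHooks_s10.1 hz).2.2
  simp only [shift, hookIndex]
  by_cases huv : z.2.2.1 = z.2.2.2
  · rw [huv] at this ⊢
    omega
  · exact Or.inl huv

lemma count_map_hookIndex (W : Fin d → Finset ℕ) (t : HookIndex d) :
    ((symbolHooks W).val.map hookIndex).count t =
      if t.IsPositive then hookCount (W t.1) (W t.2.1) t.2.2.toNat else 0 := by
  rw [Multiset.count_map, ← filter_val, card_val]
  split_ifs with ht
  · obtain ⟨i, j, e⟩ := t
    simp only [IsPositive] at ht
    refine card_nbij' (fun z => z.1) (fun a => (a, a - e.toNat, i, j)) ?_ ?_ ?_ ?_ <;>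
      rintro z hz <;> simp only [coe_filter, mem_symbolHooks_s10, hookIndex, Prod.mk.injEq,
        Set.mem_ofPred_eq] at hz ⊢
    · obtain ⟨⟨ha, hb, hab⟩, rfl, rfl, he⟩ := hz
      rw [show z.1 - e.toNat = z.2.1 by omega]
      exact ⟨ha, by omega, hb⟩
    · obtain ⟨ha, he, hb⟩ := hz
      exact ⟨⟨ha, hb, by omega⟩, trivial, trivial, by omega⟩
    · obtain ⟨a, b, u, v⟩ := z
      obtain ⟨-, rfl, rfl, he⟩ := hz
      dsimp only at he
      simp only [Prod.mk.injEq, and_true, true_and]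
      omega
  · rw [card_eq_zero, filter_eq_empty_iff]
    exact fun z hz h => ht (h ▸ isPositive_hookIndex hz)

lemma hookLen_eq_len {W : Fin d → Finset ℕ} {z : ℕ × ℕ × Fin d × Fin d}
    (hz : z ∈ symbolHooks W) (c : Fin d → ℝ) (k : ℝ) : hookLen c k z = (hookIndex z).len c k := by
  have hle : z.2.1 ≤ z.1 := by have := (mem_symbolHooks_s10.1 hz).2.2; omega
  simp only [hookLen, len, hookIndex]
  push_cast [hle]
  ring

lemma signedLen_eq_len {W : Fin d → Finset ℕ} {z : ℕ × ℕ × Fin d × Fin d}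
    (hz : z ∈ symbolHooks W) (x : Fin d → ℕ) (c : Fin d → ℝ) (k : ℝ) :
    signedLen x c k z = ((hookIndex z).shift fun i => (x i : ℤ)).normalize.len c k := by
  obtain ⟨a, b, u, v⟩ := z
  obtain ⟨-, -, hhook⟩ := mem_symbolHooks_s10.1 hz
  dsimp only at hhook
  have hle : b ≤ a := by omega
  simp only [signedLen, hookIndex, shift]
  split_ifs with h1 h2
  · rw [HookIndex.normalize, if_pos (by simp only [IsPositive]; omega)]
    simp only [len]
    push_cast [hle, h1]
    ring
  · rw [HookIndex.normalize, if_pos (by simp only [IsPositive]; omega)]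
    simp only [len]
    push_cast [hle]
    ring
  · rw [HookIndex.normalize, if_neg (by simp only [IsPositive]; omega)]
    simp only [len, reverse]
    push_cast [hle]
    ring

lemma hookLens_eq_map_len (c : Fin d → ℝ) (k : ℝ) (W : Fin d → Finset ℕ) :
    hookLens c k W = ((symbolHooks W).val.map hookIndex).map (len c k) := by
  rw [hookLens, Multiset.map_map]
  exact Multiset.map_congr rfl fun z hz => hookLen_eq_len hz c k

lemma map_signedLen_symbolHooks (x : Fin d → ℕ) (c : Fin d → ℝ) (k : ℝ) (W : Fin d → Finset ℕ) :
    (symbolHooks W).val.map (signedLen x c k) =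
      ((((symbolHooks W).val.map hookIndex).map (shift fun i => (x i : ℤ))).map
        HookIndex.normalize).map (len c k) := by
  simp only [Multiset.map_map]
  exact Multiset.map_congr rfl fun z hz => signedLen_eq_len hz x c k

end SymbolHooks

open HookIndex in
theorem map_hookIndex_symbolHooks {d : ℕ} {S Y : Fin d → Finset ℕ} (hY : IsBalancedQuotient S Y) :
    (symbolHooks S).val.map hookIndex =
      (((symbolHooks Y).val.map hookIndex).map (shift fun i => (#(S i) : ℤ))).map
          HookIndex.normalize +
        (symbolHooks (coreSymbol S)).val.map hookIndex := by
  ext t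
  rw [Multiset.count_add]
  by_cases ht : t.IsPositive
  · obtain ⟨i, j, e⟩ := t
    rw [count_map_normalize ht, count_map_shift, count_map_shift, count_map_hookIndex,
      count_map_hookIndex, count_map_hookIndex, count_map_hookIndex, if_pos ht]
    simp only [IsPositive, shift, reverse, Pi.neg_apply, neg_sub_neg,
      hookCount_balancedQuotient hY, coreSymbol, hookCount_range] at ht ⊢
    have hquot := hookCount_shiftUp_card_of_add_eq (S i) (S j)
      (ℓ := (e + ((#(S j) : ℤ) - #(S i))).toNat) (m := e.toNat)
    have hswap := hookCount_shiftUp_card_swap (S i) (S j)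
      (ℓ := (-e + ((#(S i) : ℤ) - #(S j))).toNat) (m := e.toNat)
    have hdiag : i = j → #(S i) = #(S j) := fun h => h ▸ rfl
    split_ifs <;> omega
  · rw [count_map_hookIndex, count_map_hookIndex, if_neg ht, if_neg ht,
      Multiset.count_eq_zero.2]
    intro hmem
    obtain ⟨u, hu, rfl⟩ := Multiset.mem_map.1 hmem
    obtain ⟨s, hs, rfl⟩ := Multiset.mem_map.1 hu
    obtain ⟨z, hz, rfl⟩ := Multiset.mem_map.1 hs
    exact ht (isPositive_normalize_shift_hookIndex hz _)

theorem hookLens_eq_signed_quot_add_core_general (d : ℕ) (S Y : Fin d → Finset ℕ)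
    (hY : IsBalancedQuotient S Y) (c : Fin d → ℝ) (k : ℝ) :
    hookLens c k S =
      (symbolHooks Y).val.map (signedLen (fun i => (S i).card) c k) +
        hookLens c k (coreSymbol S) := by
  rw [hookLens_eq_map_len, hookLens_eq_map_len, map_signedLen_symbolHooks,
    map_hookIndex_symbolHooks hY, Multiset.map_add]

/-- The multiset equality `𝓗^δ(S) = 𝓗̄^{δ_S}(Q) ∪ 𝓗^δ(C)`, where `Q` is the
balanced quotient and `C` the core of `S`, and `𝓗̄^{δ_S}(Q)` is the multiset of
sign-modified lengths `h̄^{δ_S}(z)` of the hooks of `Q`. -/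
theorem hookLens_eq_signed_quot_add_core (d : ℕ) (hd : 0 < d) (S Y : Fin d → Finset ℕ)
    (hY : IsBalancedQuotient S Y) (c : Fin d → ℝ) (k : ℝ) (hk : 0 ≤ k) :
    hookLens c k S =
      (symbolHooks Y).val.map (signedLen (fun i => (S i).card) c k) +
        hookLens c k (coreSymbol S) :=
  hookLens_eq_signed_quot_add_core_general d S Y hY c k
end
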